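/- Let c > 0 be a real number, let g : ℕ → ℝ be a nonnegative function, set p(n) := n^{−g(n)}, and let s₀ := 2⌈4/c⌉ + 1. Then for every integer n ≥ 1 with g(n) ≥ c/2 and every integer s ≥ s₀, the expected number of cliques of size s in the Erdős–Rényi random graph G(n,p(n)) is at most n^{−3}. -/

import Mathlib

open MeasureTheory
open scoped Classical

noncomputable def bernoulliMeasure (p : ℝ) : Measure Bool :=
  (PMF.bernoulli (min (Real.toNNReal p) 1) (min_le_right _ _)).toMeasure

noncomputable def erdosRenyi (n : ℕ) (p : ℝ) : Measure (Sym2 (Fin n) → Bool) :=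
  Measure.pi fun _ => bernoulliMeasure p

def IsCompleteOn {n : ℕ} (ω : Sym2 (Fin n) → Bool) (S : Finset (Fin n)) : Prop :=
  ∀ u ∈ S, ∀ v ∈ S, u ≠ v → ω s(u, v) = true

noncomputable def cliqueCount (n s : ℕ) (ω : Sym2 (Fin n) → Bool) : ℕ :=
  (Finset.univ.filter fun S : Finset (Fin n) => S.card = s ∧ IsCompleteOn ω S).card

/-! By linearity of expectation,
`𝔼[K_s] = C(n,s) p^C(s,2) ≤ n^s p^(s(s-1)/2) = n^(s(1 - g(n)(s-1)/2))`. The choice of `s₀` makes `g(n)(s-1)/2 ≥ (c/2)(4/c) = 2`, so the exponent is at most `-s ≤ -3`. -/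

instance (p : ℝ) : IsProbabilityMeasure (bernoulliMeasure p) :=
  PMF.toMeasure.isProbabilityMeasure _

instance (n : ℕ) (p : ℝ) : IsProbabilityMeasure (erdosRenyi n p) :=
  Measure.pi.instIsProbabilityMeasure _

lemma bernoulliMeasure_singleton_true {p : ℝ} (hp : p ≤ 1) :
    bernoulliMeasure p {true} = ENNReal.ofReal p := by
  rw [bernoulliMeasure, PMF.toMeasure_apply_singleton _ _ (measurableSet_singleton _)]
  simp [PMF.bernoulli_apply, ENNReal.ofReal, Real.toNNReal_le_one.mpr hp]

lemma setOf_isCompleteOn_eq_pi {n : ℕ} (S : Finset (Fin n)) :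
    {ω | IsCompleteOn ω S} =
      (↑(S.offDiag.image Sym2.mk.uncurry) : Set (Sym2 (Fin n))).pi fun _ => {true} := by
  ext ω
  simp only [IsCompleteOn, Set.mem_ofPred_eq, Set.mem_pi, Finset.coe_image, Set.forall_mem_image,
    Finset.coe_offDiag, Set.mem_offDiag, Finset.mem_coe, Prod.forall, Function.uncurry_apply_pair,
    Set.mem_singleton_iff, and_imp]
  exact ⟨fun h u v hu hv => h u hu v hv, fun h u hu v hv => h u v hu hv⟩

lemma cliqueCount_eq_sum_indicator (n s : ℕ) (ω : Sym2 (Fin n) → Bool) :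
    (cliqueCount n s ω : ℝ) =
      ∑ S ∈ Finset.univ.powersetCard s, {ω | IsCompleteOn ω S}.indicator 1 ω := by
  simp only [Set.indicator_apply, Set.mem_ofPred_eq, Pi.one_apply, Finset.sum_boole,
    Finset.powersetCard_eq_filter, Finset.powerset_univ, Finset.filter_filter, cliqueCount]

lemma erdosRenyi_setOf_isCompleteOn {n : ℕ} {p : ℝ} (hp : p ≤ 1) (S : Finset (Fin n)) :
    erdosRenyi n p {ω | IsCompleteOn ω S} = ENNReal.ofReal p ^ S.card.choose 2 := by
  rw [setOf_isCompleteOn_eq_pi, erdosRenyi, Measure.pi_pi_finset, Finset.prod_const,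
    bernoulliMeasure_singleton_true hp, Sym2.card_image_offDiag]

lemma integral_cliqueCount_erdosRenyi (n s : ℕ) {p : ℝ} (hp0 : 0 ≤ p) (hp1 : p ≤ 1) :
    ∫ ω, (cliqueCount n s ω : ℝ) ∂erdosRenyi n p = n.choose s * p ^ s.choose 2 := by
  simp_rw [cliqueCount_eq_sum_indicator]
  rw [integral_finsetSum _ fun _ _ => Integrable.of_finite]
  have hclique : ∀ S ∈ Finset.univ.powersetCard s,
      ∫ ω, {ω | IsCompleteOn ω S}.indicator 1 ω ∂erdosRenyi n p = p ^ s.choose 2 := by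
    intro S hS
    rw [integral_indicator_one (Set.toFinite _).measurableSet, measureReal_def,
      erdosRenyi_setOf_isCompleteOn hp1, (Finset.mem_powersetCard.mp hS).2, ENNReal.toReal_pow,
      ENNReal.toReal_ofReal hp0]
  rw [Finset.sum_congr rfl hclique, Finset.sum_const, Finset.card_powersetCard, Finset.card_univ,
    Fintype.card_fin, nsmul_eq_mul]

lemma choose_mul_rpow_neg_pow_choose_two_le {n : ℕ} (hn : 0 < n) (s : ℕ) (γ : ℝ) :
    (n.choose s : ℝ) * ((n : ℝ) ^ (-γ)) ^ s.choose 2 ≤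
      (n : ℝ) ^ ((s : ℝ) * (1 - γ * ((s - 1) / 2))) := by
  have hn' : (0 : ℝ) < n := by exact_mod_cast hn
  calc (n.choose s : ℝ) * ((n : ℝ) ^ (-γ)) ^ s.choose 2
      ≤ (n : ℝ) ^ s * ((n : ℝ) ^ (-γ)) ^ s.choose 2 := by
        gcongr
        exact_mod_cast Nat.choose_le_pow n s
    _ = (n : ℝ) ^ ((s : ℝ) * (1 - γ * ((s - 1) / 2))) := by
        rw [← Real.rpow_natCast, ← Real.rpow_natCast, ← Real.rpow_mul hn'.le, ← Real.rpow_add hn',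
          Nat.cast_choose_two]
        ring_nf

lemma mul_one_sub_mul_half_pred_le_neg_three {c γ : ℝ} {s : ℕ} (hc : 0 < c) (hγ : c / 2 ≤ γ)
    (hs : 2 * ⌈4 / c⌉₊ + 1 ≤ s) : (s : ℝ) * (1 - γ * ((s - 1) / 2)) ≤ -3 := by
  have hceil : 1 ≤ ⌈4 / c⌉₊ := Nat.one_le_ceil_iff.mpr (by positivity)
  have hs' : 2 * (⌈4 / c⌉₊ : ℝ) + 1 ≤ s := by exact_mod_cast hs
  have hs3 : (3 : ℝ) ≤ s := by exact_mod_cast (by omega : 3 ≤ s)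
  have hγs : 2 ≤ γ * ((s - 1) / 2) :=
    calc (2 : ℝ) = c / 2 * (4 / c) := by field_simp; norm_num
      _ ≤ γ * ((s - 1) / 2) :=
        mul_le_mul hγ (by linarith [Nat.le_ceil (4 / c)]) (by positivity) (by linarith)
  nlinarith

theorem erdosRenyi_expected_cliqueCount_le_of_large_size_general
    (c : ℝ) (hc : 0 < c) (g : ℕ → ℝ)
    (s₀ : ℕ) (hs₀ : s₀ = 2 * ⌈(4 : ℝ) / c⌉₊ + 1)
    (n : ℕ) (hn : 1 ≤ n) (hgn : c / 2 ≤ g n) (s : ℕ) (hs : s₀ ≤ s) :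
    ∫ ω, (cliqueCount n s ω : ℝ) ∂ erdosRenyi n ((n : ℝ) ^ (-(g n))) ≤
      (n : ℝ) ^ (-3 : ℝ) := by
  have hn' : (1 : ℝ) ≤ n := by exact_mod_cast hn
  have hp1 : (n : ℝ) ^ (-(g n)) ≤ 1 := Real.rpow_le_one_of_one_le_of_nonpos hn' (by linarith)
  rw [integral_cliqueCount_erdosRenyi n s (by positivity) hp1]
  calc _ ≤ (n : ℝ) ^ ((s : ℝ) * (1 - g n * ((s - 1) / 2))) :=
        choose_mul_rpow_neg_pow_choose_two_le hn s (g n)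
    _ ≤ (n : ℝ) ^ (-3 : ℝ) :=
        Real.rpow_le_rpow_of_exponent_le hn'
          (mul_one_sub_mul_half_pred_le_neg_three hc hgn (hs₀ ▸ hs))

/-- Let `c > 0`, `g ≥ 0`, `p(n) = n^{−g(n)}`, and `s₀ := 2⌈4/c⌉ + 1`. Then for
every `n ≥ 1` with `g(n) ≥ c/2` and every `s ≥ s₀`, the expected number of cliques of size
`s` in `G(n, p(n))` is at most `n^{−3}`. -/
theorem erdosRenyi_expected_cliqueCount_le_of_large_size
    (c : ℝ) (hc : 0 < c) (g : ℕ → ℝ) (hg : ∀ m, 0 ≤ g m)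
    (s₀ : ℕ) (hs₀ : s₀ = 2 * ⌈(4 : ℝ) / c⌉₊ + 1)
    (n : ℕ) (hn : 1 ≤ n) (hgn : c / 2 ≤ g n) (s : ℕ) (hs : s₀ ≤ s) :
    ∫ ω, (cliqueCount n s ω : ℝ) ∂ erdosRenyi n ((n : ℝ) ^ (-(g n))) ≤
      (n : ℝ) ^ (-3 : ℝ) :=
  erdosRenyi_expected_cliqueCount_le_of_large_size_general c hc g s₀ hs₀ n hn hgn s hs
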